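/- Let f : ℝⁿ → ℝ be smooth and positive with ∫ f dγ = 1, barycenter μ := ∫ x f(x) dγ(x), and finite Fisher information I(f), with f decaying so that integration by parts gives μ = ∫ ∇f dγ. Define f̂(x) := f(x + μ) · e^{−(μ·x + |μ|²/2)}. Then I(f̂) = I(f) − |μ|², and consequently (together with Ent(f̂) = Ent(f) − |μ|²/2) the deficits agree: δ(f̂) = δ(f). -/

import Mathlib

/- Common setup: the standard Gaussian measure on ℝⁿ, entropy, Fisher information,
log-Sobolev deficit, 2-Wasserstein distance, the class F(ε,M), and Hessian matrices. -/

open MeasureTheory Real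
open scoped RealInnerProductSpace

/-- The standard Gaussian probability measure `dγ = (2π)^{-n/2} e^{-|x|²/2} dx` on `ℝⁿ`. -/
noncomputable def gaussianM (n : ℕ) : Measure (EuclideanSpace ℝ (Fin n)) :=
  volume.withDensity fun x => ENNReal.ofReal ((2 * π) ^ (-(n : ℝ) / 2) * Real.exp (-‖x‖ ^ 2 / 2))

/-- Entropy `Ent(f) = ∫ f log f dγ − ‖f‖_{L¹(dγ)} log ‖f‖_{L¹(dγ)}`. -/
noncomputable def Ent (n : ℕ) (f : EuclideanSpace ℝ (Fin n) → ℝ) : ℝ :=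
  (∫ x, f x * Real.log (f x) ∂gaussianM n) -
    (∫ x, f x ∂gaussianM n) * Real.log (∫ x, f x ∂gaussianM n)

/-- Fisher information `I(f) = ∫ |∇f|²/f dγ`. -/
noncomputable def Fisher (n : ℕ) (f : EuclideanSpace ℝ (Fin n) → ℝ) : ℝ :=
  ∫ x, ‖gradient f x‖ ^ 2 / f x ∂gaussianM n

/-- The log-Sobolev deficit `δ(f) = (1/2) I(f) − Ent(f)`. -/
noncomputable def deficit (n : ℕ) (f : EuclideanSpace ℝ (Fin n) → ℝ) : ℝ :=
  (1 / 2) * Fisher n f - Ent n f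

/-- The 2-Wasserstein distance between two measures on `ℝⁿ`:
`W₂(μ,ν) = (inf_π ∫ |x−y|² dπ)^{1/2}`, the infimum running over couplings of `μ` and `ν`. -/
noncomputable def W2 {n : ℕ} (μ ν : Measure (EuclideanSpace ℝ (Fin n))) : ℝ :=
  Real.sqrt (sInf {c : ℝ |
    ∃ pl : Measure (EuclideanSpace ℝ (Fin n) × EuclideanSpace ℝ (Fin n)),
      IsProbabilityMeasure pl ∧ pl.map Prod.fst = μ ∧ pl.map Prod.snd = ν ∧
      c = ∫ p, ‖p.1 - p.2‖ ^ 2 ∂pl})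

/-- The class `F(ε,M)`: functions `f = e^{-h}` with `h` twice differentiable and
`(−1+ε)·Id ≤ D²h(x) ≤ M·Id` for all `x` (as quadratic forms). -/
def memF (n : ℕ) (ε M : ℝ) (f : EuclideanSpace ℝ (Fin n) → ℝ) : Prop :=
  ∃ h : EuclideanSpace ℝ (Fin n) → ℝ,
    (∀ x, f x = Real.exp (-h x)) ∧
    Differentiable ℝ h ∧ Differentiable ℝ (fderiv ℝ h) ∧
    (∀ x v, (-1 + ε) * ‖v‖ ^ 2 ≤ fderiv ℝ (fderiv ℝ h) x v v) ∧
    (∀ x v, fderiv ℝ (fderiv ℝ h) x v v ≤ M * ‖v‖ ^ 2)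

/-- The Hessian matrix `D²g(x)` of `g : ℝⁿ → ℝ`, in the standard basis. -/
noncomputable def hessM (n : ℕ) (g : EuclideanSpace ℝ (Fin n) → ℝ)
    (x : EuclideanSpace ℝ (Fin n)) : Matrix (Fin n) (Fin n) ℝ :=
  Matrix.of fun i j =>
    fderiv ℝ (fderiv ℝ g) x (EuclideanSpace.single i 1) (EuclideanSpace.single j 1)

/- ======================= Auxiliary material ======================= -/

/-- The Gaussian density. -/
noncomputable def gdens (n : ℕ) (x : EuclideanSpace ℝ (Fin n)) : ℝ :=
  (2 * π) ^ (-(n : ℝ) / 2) * Real.exp (-‖x‖ ^ 2 / 2)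

lemma gdens_pos {n : ℕ} (x : EuclideanSpace ℝ (Fin n)) : 0 < gdens n x := by
  unfold gdens; positivity

lemma gdens_meas {n : ℕ} : Measurable fun x : EuclideanSpace ℝ (Fin n) =>
    (gdens n x).toNNReal := by
  unfold gdens; fun_prop

lemma gaussianM_eq (n : ℕ) : gaussianM n
    = volume.withDensity fun x => ((gdens n x).toNNReal : ENNReal) := rfl

lemma gauss_integral_eq {n : ℕ} {X : Type*} [NormedAddCommGroup X] [NormedSpace ℝ X]
    (g : EuclideanSpace ℝ (Fin n) → X) :
    ∫ x, g x ∂gaussianM n = ∫ x, gdens n x • g x := by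
  rw [gaussianM_eq, integral_withDensity_eq_integral_smul gdens_meas]
  congr 1; funext x
  rw [NNReal.smul_def, Real.coe_toNNReal _ (gdens_pos x).le]

lemma gdens_translate {n : ℕ} (μ x : EuclideanSpace ℝ (Fin n)) :
    gdens n x * Real.exp (-(⟪μ, x⟫ + ‖μ‖ ^ 2 / 2)) = gdens n (x + μ) := by
  have harg : -‖x‖ ^ 2 / 2 + -(⟪μ, x⟫ + ‖μ‖ ^ 2 / 2) = -‖x + μ‖ ^ 2 / 2 := by
    have h := norm_add_sq_real x μ
    have h2 : ⟪μ, x⟫ = ⟪x, μ⟫ := real_inner_comm x μ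
    linarith
  unfold gdens
  rw [mul_assoc, ← Real.exp_add, harg]

lemma hasGradientAt_hat {n : ℕ} (f : EuclideanSpace ℝ (Fin n) → ℝ) (hsmooth : ContDiff ℝ (⊤ : ℕ∞) f)
    (μ x : EuclideanSpace ℝ (Fin n)) (c : ℝ) :
    HasGradientAt (fun y => f (y + μ) * Real.exp (-(⟪μ, y⟫ + c)))
      (Real.exp (-(⟪μ, x⟫ + c)) • (gradient f (x + μ) - f (x + μ) • μ)) x := by
  have hdf : HasFDerivAt f (fderiv ℝ f (x + μ)) (x + μ) :=
    (hsmooth.differentiable (by simp) (x + μ)).hasFDerivAt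
  have htr : HasFDerivAt (fun y : EuclideanSpace ℝ (Fin n) => y + μ)
      (ContinuousLinearMap.id ℝ (EuclideanSpace ℝ (Fin n))) x :=
    (hasFDerivAt_id x).add_const μ
  have h1 : HasFDerivAt (fun y => f (y + μ)) (fderiv ℝ f (x + μ)) x := by
    have := hdf.comp x htr
    rwa [ContinuousLinearMap.comp_id] at this
  have h2 : HasFDerivAt (fun y : EuclideanSpace ℝ (Fin n) => -(⟪μ, y⟫ + c))
      (-(innerSL ℝ μ)) x := (((innerSL ℝ μ).hasFDerivAt).add_const c).neg
  have h4 := h1.mul h2.exp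
  rw [hasGradientAt_iff_hasFDerivAt]
  have hgr : ∀ v : EuclideanSpace ℝ (Fin n),
      ⟪gradient f (x + μ), v⟫ = fderiv ℝ f (x + μ) v := fun v => by
    rw [← InnerProductSpace.toDual_apply_apply]
    simp [gradient]
  have hL : InnerProductSpace.toDual ℝ (EuclideanSpace ℝ (Fin n))
        (Real.exp (-(⟪μ, x⟫ + c)) • (gradient f (x + μ) - f (x + μ) • μ))
      = f (x + μ) • Real.exp (-(⟪μ, x⟫ + c)) • -(innerSL ℝ μ)
        + Real.exp (-(⟪μ, x⟫ + c)) • fderiv ℝ f (x + μ) := by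
    ext v
    simp only [InnerProductSpace.toDual_apply_apply, real_inner_smul_left, inner_sub_left,
      hgr, ContinuousLinearMap.add_apply, ContinuousLinearMap.smul_apply,
      ContinuousLinearMap.neg_apply, innerSL_apply_apply, smul_eq_mul]
    ring
  rw [hL]
  exact h4

/-- **Fisher information under recentering.** If `f` is smooth, positive, of unit mass with
barycenter `μ`, finite Fisher information, `f log f ∈ L¹(dγ)`, and `μ = ∫ ∇f dγ`
(integration by parts), then `f̂(x) = f(x+μ) e^{−(μ·x + |μ|²/2)}` satisfies
`I(f̂) = I(f) − |μ|²` and consequently `δ(f̂) = δ(f)`. -/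
theorem recenter_fisher_deficit (n : ℕ) (f : EuclideanSpace ℝ (Fin n) → ℝ)
    (hsmooth : ContDiff ℝ (⊤ : ℕ∞) f) (hpos : ∀ x, 0 < f x)
    (hmass : ∫ x, f x ∂gaussianM n = 1)
    (hbarint : Integrable (fun x => f x • x) (gaussianM n))
    (hlogint : Integrable (fun x => f x * Real.log (f x)) (gaussianM n))
    (hfisherint : Integrable (fun x => ‖gradient f x‖ ^ 2 / f x) (gaussianM n))
    (μ : EuclideanSpace ℝ (Fin n)) (hμ : μ = ∫ x, f x • x ∂gaussianM n)
    (hibp : μ = ∫ x, gradient f x ∂gaussianM n)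
    (fhat : EuclideanSpace ℝ (Fin n) → ℝ)
    (hfhat : ∀ x, fhat x = f (x + μ) * Real.exp (-(⟪μ, x⟫ + ‖μ‖ ^ 2 / 2))) :
    Fisher n fhat = Fisher n f - ‖μ‖ ^ 2 ∧ deficit n fhat = deficit n f := by
  by_cases hg : Integrable (fun x => gradient f x) (gaussianM n)
  swap
  · -- degenerate case : μ = 0, so fhat = f
    have hμ0 : μ = 0 := by rw [hibp, integral_undef hg]
    have hff : fhat = f := by
      funext x
      rw [hfhat, hμ0]
      simp
    rw [hff, hμ0]
    simp
  -- main case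
  have hfe : fhat = fun y => f (y + μ) * Real.exp (-(⟪μ, y⟫ + ‖μ‖ ^ 2 / 2)) := funext hfhat
  subst hfe
  set F : EuclideanSpace ℝ (Fin n) → ℝ :=
    fun y => f (y + μ) * Real.exp (-(⟪μ, y⟫ + ‖μ‖ ^ 2 / 2)) with hF
  have hepos : ∀ x : EuclideanSpace ℝ (Fin n),
      0 < Real.exp (-(⟪μ, x⟫ + ‖μ‖ ^ 2 / 2)) := fun x => Real.exp_pos _
  have hfint : Integrable f (gaussianM n) := by
    by_contra h
    rw [integral_undef h] at hmass
    exact one_ne_zero hmass.symm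
  have hgradF : ∀ x, gradient F x
      = Real.exp (-(⟪μ, x⟫ + ‖μ‖ ^ 2 / 2)) • (gradient f (x + μ) - f (x + μ) • μ) :=
    fun x => (hasGradientAt_hat f hsmooth μ x _).gradient
  -- the recentered integrands
  set G : EuclideanSpace ℝ (Fin n) → ℝ :=
    fun y => ‖gradient f y - f y • μ‖ ^ 2 / f y with hG
  have key1 : ∀ x, gdens n x • (‖gradient F x‖ ^ 2 / F x)
      = (fun y => gdens n y • G y) (x + μ) := by
    intro x
    have hf0 : f (x + μ) ≠ 0 := (hpos _).ne'
    have he0 : Real.exp (-(⟪μ, x⟫ + ‖μ‖ ^ 2 / 2)) ≠ 0 := (hepos x).ne'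
    rw [hgradF x]
    simp only [hgradF x, norm_smul, Real.norm_eq_abs, abs_of_pos (hepos x), smul_eq_mul, hG, hF]
    rw [← gdens_translate μ x]
    field_simp
  have hfisher_hat : Fisher n F = ∫ y, gdens n y • G y := by
    rw [Fisher, gauss_integral_eq]
    rw [show (fun x => gdens n x • (‖gradient F x‖ ^ 2 / F x))
        = fun x => (fun y => gdens n y • G y) (x + μ) from funext key1]
    exact integral_add_right_eq_self (fun y => gdens n y • G y) μ
  -- expand G
  have hGexp : ∀ y, G y = ‖gradient f y‖ ^ 2 / f y - 2 * ⟪μ, gradient f y⟫ + ‖μ‖ ^ 2 * f y := by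
    intro y
    have hf0 : f y ≠ 0 := (hpos y).ne'
    have h := norm_sub_sq_real (gradient f y) (f y • μ)
    have h2 : ⟪gradient f y, f y • μ⟫ = f y * ⟪μ, gradient f y⟫ := by
      rw [real_inner_smul_right, real_inner_comm]
    have h3 : ‖f y • μ‖ ^ 2 = f y ^ 2 * ‖μ‖ ^ 2 := by
      rw [norm_smul, mul_pow, Real.norm_eq_abs, sq_abs]
    rw [h2, h3] at h
    simp only [hG]
    rw [h]
    field_simp
  have hi2 : Integrable (fun y => ⟪μ, gradient f y⟫) (gaussianM n) :=
    (innerSL ℝ μ).integrable_comp hg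
  have hint2 : ∫ y, ⟪μ, gradient f y⟫ ∂gaussianM n = ‖μ‖ ^ 2 := by
    rw [integral_inner hg μ, ← hibp, real_inner_self_eq_norm_sq]
  have hGint : ∫ y, gdens n y • G y = Fisher n f - ‖μ‖ ^ 2 := by
    rw [← gauss_integral_eq G]
    rw [show G = fun y => ‖gradient f y‖ ^ 2 / f y - 2 * ⟪μ, gradient f y⟫ + ‖μ‖ ^ 2 * f y
      from funext hGexp]
    have iA : Integrable (fun y => ‖gradient f y‖ ^ 2 / f y - 2 * ⟪μ, gradient f y⟫)
        (gaussianM n) := hfisherint.sub (hi2.const_mul 2)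
    have iB : Integrable (fun y => 2 * ⟪μ, gradient f y⟫) (gaussianM n) := hi2.const_mul 2
    rw [integral_add iA (hfint.const_mul (‖μ‖ ^ 2)),
      integral_sub hfisherint iB, integral_const_mul, integral_const_mul,
      hint2, hmass, Fisher]
    ring
  have hFisherEq : Fisher n F = Fisher n f - ‖μ‖ ^ 2 := by rw [hfisher_hat, hGint]
  refine ⟨hFisherEq, ?_⟩
  -- Entropy part
  have hmass_hat : ∫ x, F x ∂gaussianM n = 1 := by
    rw [gauss_integral_eq]
    have : (fun x => gdens n x • F x) = fun x => (fun y => gdens n y • f y) (x + μ) := by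
      funext x
      simp only [hF, smul_eq_mul, ← mul_assoc]
      rw [mul_comm (gdens n x) (f (x + μ)), mul_assoc, gdens_translate μ x, mul_comm]
    rw [this, integral_add_right_eq_self (fun y => gdens n y • f y) μ, ← gauss_integral_eq f,
      hmass]
  set H : EuclideanSpace ℝ (Fin n) → ℝ :=
    fun y => f y * Real.log (f y) - f y * (⟪μ, y⟫ - ‖μ‖ ^ 2 / 2) with hH
  have key2 : ∀ x, gdens n x • (F x * Real.log (F x))
      = (fun y => gdens n y • H y) (x + μ) := by
    intro x
    have hf0 : f (x + μ) ≠ 0 := (hpos _).ne'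
    have he0 : Real.exp (-(⟪μ, x⟫ + ‖μ‖ ^ 2 / 2)) ≠ 0 := (hepos x).ne'
    have hlog : Real.log (F x) = Real.log (f (x + μ)) - (⟪μ, x⟫ + ‖μ‖ ^ 2 / 2) := by
      simp only [hF]
      rw [Real.log_mul hf0 he0, Real.log_exp]
      ring
    have hinn : ⟪μ, x + μ⟫ = ⟪μ, x⟫ + ‖μ‖ ^ 2 := by
      rw [inner_add_right, real_inner_self_eq_norm_sq]
    rw [hlog]
    simp only [hF, hH, hlog, smul_eq_mul, hinn]
    rw [← gdens_translate μ x]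
    ring
  have hHint : ∫ y, H y ∂gaussianM n
      = (∫ y, f y * Real.log (f y) ∂gaussianM n) - ‖μ‖ ^ 2 / 2 := by
    have hi2' : Integrable (fun y => f y * ⟪μ, y⟫) (gaussianM n) := by
      have := (innerSL ℝ μ).integrable_comp hbarint
      apply this.congr
      filter_upwards with y
      simp only [innerSL_apply_apply, real_inner_smul_right]
      try ring
    have hint2' : ∫ y, f y * ⟪μ, y⟫ ∂gaussianM n = ‖μ‖ ^ 2 := by
      have h1 : ∀ y : EuclideanSpace ℝ (Fin n), f y * ⟪μ, y⟫ = ⟪μ, f y • y⟫ := fun y => by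
        rw [real_inner_smul_right]; try ring
      rw [show (fun y => f y * ⟪μ, y⟫) = fun y => ⟪μ, f y • y⟫ from funext h1]
      rw [integral_inner hbarint μ, ← hμ, real_inner_self_eq_norm_sq]
    have hHrw : H = fun y =>
        f y * Real.log (f y) - (f y * ⟪μ, y⟫ - ‖μ‖ ^ 2 / 2 * f y) := by
      funext y; simp only [hH]; ring
    have iC : Integrable (fun y => f y * ⟪μ, y⟫ - ‖μ‖ ^ 2 / 2 * f y) (gaussianM n) :=
      hi2'.sub (hfint.const_mul _)
    have iD : Integrable (fun y => ‖μ‖ ^ 2 / 2 * f y) (gaussianM n) := hfint.const_mul _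
    rw [hHrw, integral_sub hlogint iC, integral_sub hi2' iD, integral_const_mul, hint2', hmass]
    ring
  have hlog_hat : ∫ x, F x * Real.log (F x) ∂gaussianM n
      = (∫ y, f y * Real.log (f y) ∂gaussianM n) - ‖μ‖ ^ 2 / 2 := by
    rw [gauss_integral_eq, show (fun x => gdens n x • (F x * Real.log (F x)))
        = fun x => (fun y => gdens n y • H y) (x + μ) from funext key2,
      integral_add_right_eq_self (fun y => gdens n y • H y) μ, ← gauss_integral_eq H, hHint]
  have hEntF : Ent n F = (∫ y, f y * Real.log (f y) ∂gaussianM n) - ‖μ‖ ^ 2 / 2 := by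
    rw [Ent, hlog_hat, hmass_hat]
    simp
  have hEntf : Ent n f = ∫ y, f y * Real.log (f y) ∂gaussianM n := by
    rw [Ent, hmass]
    simp
  rw [deficit, deficit, hFisherEq, hEntF, hEntf]
  ring
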